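/- The neighborhood N = {(0,1), (−1,0), (1,1), (1,−1), (−1,−1)} (neighborhood 151 in the 8-bit numbering of subsets of the Moore neighborhood) admits a timed crossover gate of size 10 × 10 and delay 13. -/

import Mathlib

/-! Sandpile models on ℤ² and timed crossover gates. -/

abbrev Cell : Type := ℤ × ℤ
abbrev Config : Type := Cell → ℕ

namespace Sandpile

/-- The threshold of a sandpile model is the cardinality of its neighborhood. -/
def θ (𝒩 : Finset Cell) : ℕ := 𝒩.card

/-- The parallel sandpile dynamics: each cell reaching the threshold topples,
sending one grain to each of its out-neighbors. -/
def F (𝒩 : Finset Cell) (c : Config) : Config := fun p =>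
  c p - θ 𝒩 * (if θ 𝒩 ≤ c p then 1 else 0)
    + ∑ p' ∈ 𝒩, (if θ 𝒩 ≤ c (p - p') then 1 else 0)

/-- The configuration with a single grain at cell `p`. -/
def one (p : Cell) : Config := fun q => if q = p then 1 else 0

/-- A configuration is stable when every cell is below the threshold. -/
def Stable (𝒩 : Finset Cell) (c : Config) : Prop := ∀ p, c p < θ 𝒩

/-- The rectangle {0,…,M−1} × {0,…,N'−1}. -/
def Rect (M N' : ℕ) : Set Cell :=
  {p | 0 ≤ p.1 ∧ p.1 < (M : ℤ) ∧ 0 ≤ p.2 ∧ p.2 < (N' : ℤ)}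

/-- The four corners of the rectangle. -/
def Corners (M N' : ℕ) : Set Cell :=
  {(0, 0), ((M : ℤ) - 1, 0), (0, (N' : ℤ) - 1), ((M : ℤ) - 1, (N' : ℤ) - 1)}

/-- The four sides of the rectangle. -/
def side (M N' : ℕ) (i : Fin 4) : Set Cell :=
  if i = 0 then {p | p.1 = 0 ∧ 0 ≤ p.2 ∧ p.2 < (N' : ℤ)}
  else if i = 1 then {p | p.2 = 0 ∧ 0 ≤ p.1 ∧ p.1 < (M : ℤ)}
  else if i = 2 then {p | p.1 = (M : ℤ) - 1 ∧ 0 ≤ p.2 ∧ p.2 < (N' : ℤ)}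
  else {p | p.2 = (N' : ℤ) - 1 ∧ 0 ≤ p.1 ∧ p.1 < (M : ℤ)}

/-- A timed crossover gate of size M × N' and delay T for the sandpile model 𝒩:
a stable configuration `g` supported on the rectangle, together with four
non-corner cells `n`, `e`, `s`, `w` on four pairwise different sides, `n, s`
(resp. `w, e`) on opposite sides, such that adding a grain at `n` (resp. `w`)
makes `s` (resp. `e`) reach the threshold at time exactly `T`, while no cell
on the two other sides reaches the threshold at any time `t ≤ T`. -/
def IsTimedCrossoverGate (𝒩 : Finset Cell) (M N' T : ℕ)
    (g : Config) (n e s w : Cell) : Prop :=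
  Stable 𝒩 g ∧
  (∀ p, p ∉ Rect M N' → g p = 0) ∧
  n ∈ Rect M N' ∧ e ∈ Rect M N' ∧ s ∈ Rect M N' ∧ w ∈ Rect M N' ∧
  n ∉ Corners M N' ∧ e ∉ Corners M N' ∧ s ∉ Corners M N' ∧ w ∉ Corners M N' ∧
  ∃ iN iE iS iW : Fin 4,
    n ∈ side M N' iN ∧ e ∈ side M N' iE ∧ s ∈ side M N' iS ∧ w ∈ side M N' iW ∧
    ((iN : ℤ) - (iS : ℤ)).natAbs = 2 ∧
    ((iW : ℤ) - (iE : ℤ)).natAbs = 2 ∧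
    ({iN, iE, iS, iW} : Finset (Fin 4)) = Finset.univ ∧
    θ 𝒩 ≤ (F 𝒩)^[T] (g + one n) s ∧
    (∀ p ∈ side M N' iW ∪ side M N' iE, ∀ t ≤ T, (F 𝒩)^[t] (g + one n) p < θ 𝒩) ∧
    θ 𝒩 ≤ (F 𝒩)^[T] (g + one w) e ∧
    (∀ p ∈ side M N' iN ∪ side M N' iS, ∀ t ≤ T, (F 𝒩)^[t] (g + one w) p < θ 𝒩)

/-
The gate is given explicitly. To follow its two runs, the dynamics is tabulated on a finite
window: as long as every cell that topples sends all its grains into the window, the tabulated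
trajectory is exactly the trajectory of `F`. For both inputs this confinement, the arrival of
the signal at time 13 and the quietness of the two other sides are then finite computations,
checked by the kernel.
-/

instance (M N' : ℕ) (p : Cell) : Decidable (p ∈ Rect M N') :=
  inferInstanceAs (Decidable (0 ≤ p.1 ∧ p.1 < (M : ℤ) ∧ 0 ≤ p.2 ∧ p.2 < (N' : ℤ)))

theorem F_apply_eq_zero_of_notMem {𝒩 : Finset Cell} {B : Set Cell} {c : Config}
    (hc : ∀ p ∉ B, c p = 0) (hB : ∀ p, θ 𝒩 ≤ c p → ∀ p' ∈ 𝒩, p + p' ∈ B)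
    {p : Cell} (hp : p ∉ B) : F 𝒩 c p = 0 := by
  have hin : ∀ p' ∈ 𝒩, ¬ θ 𝒩 ≤ c (p - p') := fun p' hp' htop =>
    hp (by simpa using hB _ htop p' hp')
  simp [F, hc p hp, Finset.sum_eq_zero (fun p' hp' => if_neg (hin p' hp'))]

theorem _root_.List.getD_mem_or_eq_default {α : Type*} (l : List α) (i : ℕ) (x : α) :
    l.getD i x ∈ l ∨ l.getD i x = x := by
  rw [List.getD_eq_getElem?_getD]
  cases h : l[i]? with
  | none => exact Or.inr rfl
  | some a => exact Or.inl (List.mem_of_getElem? h)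

def window (o : Cell) (m n : ℕ) : Set Cell := {p | p - o ∈ Rect m n}

/-- Row `i`, column `j` of a grid placed at `o` holds the cell `o + (i, j)`. -/
abbrev Grid : Type := List (List ℕ)

namespace Grid

def get (d : Grid) (i j : ℕ) : ℕ := (d.getD i []).getD j 0

def toConfig (o : Cell) (d : Grid) : Config := fun p =>
  if o.1 ≤ p.1 ∧ o.2 ≤ p.2 then d.get (p.1 - o.1).toNat (p.2 - o.2).toNat else 0

def ofConfig (o : Cell) (m n : ℕ) (c : Config) : Grid :=
  (List.range m).map fun i : ℕ => (List.range n).map fun j : ℕ => c (o.1 + i, o.2 + j)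

theorem get_ofConfig (o : Cell) (m n : ℕ) (c : Config) (i j : ℕ) :
    (ofConfig o m n c).get i j = if i < m ∧ j < n then c (o.1 + i, o.2 + j) else 0 := by
  by_cases hi : i < m <;> by_cases hj : j < n <;>
    simp [get, ofConfig, List.getD_eq_getElem?_getD, hi, hj]

theorem toConfig_ofConfig (o : Cell) (m n : ℕ) (c : Config) (p : Cell) :
    (ofConfig o m n c).toConfig o p = (window o m n).indicator c p := by
  obtain ⟨x, y⟩ := p
  simp only [toConfig, get_ofConfig, Set.indicator_apply, window, Rect, Set.mem_ofPred_eq,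
    Prod.fst_sub, Prod.snd_sub]
  by_cases hin : o.1 ≤ x ∧ o.2 ≤ y
  · have hx : o.1 + ((x - o.1).toNat : ℤ) = x := by omega
    have hy : o.2 + ((y - o.2).toNat : ℤ) = y := by omega
    rw [if_pos hin, hx, hy]
    congr 1
    apply propext
    omega
  · rw [if_neg hin, if_neg (by omega)]

theorem toConfig_ofConfig_of_support {o : Cell} {m n : ℕ} {c : Config}
    (hc : ∀ p ∉ window o m n, c p = 0) : (ofConfig o m n c).toConfig o = c := by
  funext p
  rw [toConfig_ofConfig, Set.indicator_apply_eq_self]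
  exact hc p

theorem toConfig_eq_zero {d : Grid} {o : Cell} {m n : ℕ} (hm : d.length ≤ m)
    (hn : ∀ r ∈ d, r.length ≤ n) {p : Cell} (hp : p ∉ window o m n) : d.toConfig o p = 0 := by
  simp only [window, Rect, Set.mem_ofPred_eq, Prod.fst_sub, Prod.snd_sub] at hp
  simp only [toConfig, get]
  split_ifs with hin
  · by_cases hi : (p.1 - o.1).toNat < m
    · have hrow : (d.getD (p.1 - o.1).toNat []).length ≤ n := by
        rcases d.getD_mem_or_eq_default (p.1 - o.1).toNat [] with hr | hr
        · exact hn _ hr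
        · rw [hr]
          exact Nat.zero_le n
      exact List.getD_eq_default _ 0 (by omega)
    · rw [List.getD_eq_default d [] (by omega)]
      rfl
  · rfl

theorem toConfig_lt {d : Grid} {k : ℕ} (hk : 0 < k) (hd : ∀ r ∈ d, ∀ a ∈ r, a < k)
    (o p : Cell) : d.toConfig o p < k := by
  simp only [toConfig, get]
  split_ifs
  · rcases (d.getD (p.1 - o.1).toNat []).getD_mem_or_eq_default (p.2 - o.2).toNat 0 with ha | ha
    · rcases d.getD_mem_or_eq_default (p.1 - o.1).toNat [] with hr | hr
      · exact hd _ hr _ ha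
      · rw [hr] at ha
        exact absurd ha List.not_mem_nil
    · rw [ha]
      exact hk
  · exact hk

def ToppleInside (𝒩 : Finset Cell) (m n : ℕ) (d : Grid) : Prop :=
  ∀ i < m, ∀ j < n, θ 𝒩 ≤ d.get i j → ∀ p' ∈ 𝒩, ((i : ℤ) + p'.1, (j : ℤ) + p'.2) ∈ Rect m n

instance (𝒩 : Finset Cell) (m n : ℕ) (d : Grid) : Decidable (d.ToppleInside 𝒩 m n) := by
  unfold ToppleInside; infer_instance

theorem ToppleInside.add_mem_window {𝒩 : Finset Cell} {o : Cell} {m n : ℕ} {c : Config}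
    (h : (ofConfig o m n c).ToppleInside 𝒩 m n) {q : Cell}
    (hq : θ 𝒩 ≤ (ofConfig o m n c).toConfig o q) {p' : Cell} (hp' : p' ∈ 𝒩) :
    q + p' ∈ window o m n := by
  rw [toConfig_ofConfig] at hq
  by_cases hqw : q ∈ window o m n
  · rw [Set.indicator_of_mem hqw] at hq
    obtain ⟨x, y⟩ := q
    simp only [window, Rect, Set.mem_ofPred_eq, Prod.fst_sub, Prod.snd_sub, Prod.fst_add,
      Prod.snd_add] at hqw ⊢
    have hxy : ((o.1 + (x - o.1).toNat : ℤ), (o.2 + (y - o.2).toNat : ℤ)) = (x, y) := by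
      ext <;> simp only <;> omega
    have := h (x - o.1).toNat (by omega) (y - o.2).toNat (by omega)
      (by rwa [get_ofConfig, if_pos (by omega), hxy]) p' hp'
    simp only [Rect, Set.mem_ofPred_eq] at this
    omega
  · rw [Set.indicator_of_notMem hqw] at hq
    exact absurd (Nat.le_zero.mp hq) (Finset.card_pos.2 ⟨p', hp'⟩).ne'

theorem ToppleInside.toConfig_ofConfig_F {𝒩 : Finset Cell} {o : Cell} {m n : ℕ} {c : Config}
    (h : (ofConfig o m n c).ToppleInside 𝒩 m n) :
    (ofConfig o m n (F 𝒩 ((ofConfig o m n c).toConfig o))).toConfig o =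
      F 𝒩 ((ofConfig o m n c).toConfig o) :=
  toConfig_ofConfig_of_support fun _ hp =>
    F_apply_eq_zero_of_notMem
      (fun q hq => by rw [toConfig_ofConfig, Set.indicator_of_notMem hq])
      (fun _ hq _ hp' => h.add_mem_window hq hp') hp

end Grid

def simulate (𝒩 : Finset Cell) (o : Cell) (m n : ℕ) (c : Config) : ℕ → Grid
  | 0 => Grid.ofConfig o m n c
  | t + 1 => Grid.ofConfig o m n (F 𝒩 ((simulate 𝒩 o m n c t).toConfig o))

theorem iterate_F_eq_toConfig_simulate {𝒩 : Finset Cell} {o : Cell} {m n : ℕ} {c : Config}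
    (hc : ∀ p ∉ window o m n, c p = 0) {T : ℕ}
    (hT : ∀ t < T, (simulate 𝒩 o m n c t).ToppleInside 𝒩 m n) :
    ∀ t ≤ T, (F 𝒩)^[t] c = (simulate 𝒩 o m n c t).toConfig o := by
  intro t
  induction t with
  | zero => exact fun _ => (Grid.toConfig_ofConfig_of_support hc).symm
  | succ t ih =>
    intro ht
    obtain ⟨c', hc'⟩ : ∃ c', simulate 𝒩 o m n c t = Grid.ofConfig o m n c' := by
      cases t <;> exact ⟨_, rfl⟩
    have hstep := (hc' ▸ hT t ht).toConfig_ofConfig_F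
    rw [Function.iterate_succ_apply', ih (Nat.le_of_succ_le ht), simulate, hc', hstep]

theorem forall_mem_side_zero_union_two {M N' : ℕ} {P : Cell → Prop}
    (h : ∀ y : ℕ, y < N' → P (0, y) ∧ P ((M : ℤ) - 1, y)) :
    ∀ p ∈ side M N' 0 ∪ side M N' 2, P p := by
  rintro ⟨x, y⟩ hp
  simp only [side, Fin.isValue, ↓reduceIte, Fin.reduceEq, Set.mem_union, Set.mem_ofPred_eq]
    at hp
  rcases hp with ⟨rfl, hy0, hyN⟩ | ⟨rfl, hy0, hyN⟩
  · simpa [Int.toNat_of_nonneg hy0] using (h y.toNat (by omega)).1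
  · simpa [Int.toNat_of_nonneg hy0] using (h y.toNat (by omega)).2

theorem forall_mem_side_one_union_three {M N' : ℕ} {P : Cell → Prop}
    (h : ∀ x : ℕ, x < M → P (x, 0) ∧ P (x, (N' : ℤ) - 1)) :
    ∀ p ∈ side M N' 1 ∪ side M N' 3, P p := by
  rintro ⟨x, y⟩ hp
  simp only [side, Fin.isValue, one_ne_zero, ↓reduceIte, Fin.reduceEq, Set.mem_union,
    Set.mem_ofPred_eq] at hp
  rcases hp with ⟨rfl, hx0, hxM⟩ | ⟨rfl, hx0, hxM⟩
  · simpa [Int.toNat_of_nonneg hx0] using (h x.toNat (by omega)).1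
  · simpa [Int.toNat_of_nonneg hx0] using (h x.toNat (by omega)).2

def nbhd151 : Finset Cell := {(0,1),(-1,0),(1,1),(1,-1),(-1,-1)}

def gateGrid : Grid :=
  [[0, 0, 0, 0, 0, 0, 4, 0, 0, 0],
   [0, 3, 0, 4, 4, 4, 3, 3, 0, 0],
   [0, 3, 0, 3, 4, 3, 4, 4, 1, 0],
   [0, 0, 2, 2, 3, 3, 3, 0, 0, 0],
   [4, 4, 3, 1, 0, 4, 3, 0, 4, 4],
   [0, 1, 4, 4, 4, 1, 1, 4, 3, 0],
   [0, 1, 1, 4, 2, 4, 3, 3, 3, 0],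
   [0, 4, 4, 2, 0, 3, 4, 4, 1, 0],
   [0, 0, 4, 4, 3, 3, 0, 0, 4, 0],
   [0, 0, 0, 4, 0, 0, 0, 0, 0, 0]]

def gate : Config := gateGrid.toConfig 0

theorem gate_stable : Stable nbhd151 gate :=
  fun p => Grid.toConfig_lt (by decide) (by decide) _ p

theorem gate_eq_zero {p : Cell} (hp : p ∉ Rect 10 10) : gate p = 0 :=
  Grid.toConfig_eq_zero (m := 10) (n := 10) (by decide) (by decide) (by simpa [window] using hp)

theorem gate_add_one_eq_zero {q : Cell} (hq : q ∈ Rect 10 10) :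
    ∀ p ∉ window (-1, -1) 11 11, (gate + one q) p = 0 := by
  intro p hp
  have hpR : p ∉ Rect 10 10 := fun h => hp (by
    simp only [window, Rect, Set.mem_ofPred_eq, Prod.fst_sub, Prod.snd_sub] at h ⊢
    omega)
  simp only [Pi.add_apply, gate_eq_zero hpR, one, zero_add]
  exact if_neg fun h : p = q => hpR (h ▸ hq)

/-- The window `[-1, 10)²` is large enough: the `ToppleInside` checks below show that neither run
leaves it. -/
def run (q : Cell) : ℕ → Grid := simulate nbhd151 (-1, -1) 11 11 (gate + one q)

theorem run_north_toppleInside : ∀ t < 13, (run (4, 0) t).ToppleInside nbhd151 11 11 := by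
  decide +kernel

theorem run_north_signal : θ nbhd151 ≤ (run (4, 0) 13).toConfig (-1, -1) (4, 9) := by
  decide +kernel

theorem run_north_quiet : ∀ t ≤ 13, ∀ y : ℕ, y < 10 →
    (run (4, 0) t).toConfig (-1, -1) (0, y) < θ nbhd151 ∧
      (run (4, 0) t).toConfig (-1, -1) (9, y) < θ nbhd151 := by
  decide +kernel

theorem run_west_toppleInside : ∀ t < 13, (run (0, 6) t).ToppleInside nbhd151 11 11 := by
  decide +kernel

theorem run_west_signal : θ nbhd151 ≤ (run (0, 6) 13).toConfig (-1, -1) (9, 3) := by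
  decide +kernel

theorem run_west_quiet : ∀ t ≤ 13, ∀ x : ℕ, x < 10 →
    (run (0, 6) t).toConfig (-1, -1) (x, 0) < θ nbhd151 ∧
      (run (0, 6) t).toConfig (-1, -1) (x, 9) < θ nbhd151 := by
  decide +kernel

theorem nbhd151_timed_crossover :
    ∃ g n e s w, IsTimedCrossoverGate
      ({(0,1),(-1,0),(1,1),(1,-1),(-1,-1)} : Finset Cell) 10 10 13 g n e s w := by
  show ∃ g n e s w, IsTimedCrossoverGate nbhd151 10 10 13 g n e s w
  have hN := iterate_F_eq_toConfig_simulate (gate_add_one_eq_zero (q := (4, 0)) (by decide))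
    run_north_toppleInside
  have hW := iterate_F_eq_toConfig_simulate (gate_add_one_eq_zero (q := (0, 6)) (by decide))
    run_west_toppleInside
  refine ⟨gate, (4, 0), (9, 3), (4, 9), (0, 6), gate_stable, fun p => gate_eq_zero,
    by decide, by decide, by decide, by decide, by simp [Corners], by simp [Corners],
    by simp [Corners], by simp [Corners], 1, 2, 3, 0, by simp [side], by simp [side],
    by simp [side], by simp [side], by decide, by decide, by decide, ?_, ?_, ?_, ?_⟩
  · rw [hN 13 le_rfl]
    exact run_north_signal
  · refine forall_mem_side_zero_union_two fun y hy => ⟨fun t ht => ?_, fun t ht => ?_⟩ <;>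
      rw [hN t ht]
    exacts [(run_north_quiet t ht y hy).1, (run_north_quiet t ht y hy).2]
  · rw [hW 13 le_rfl]
    exact run_west_signal
  · refine forall_mem_side_one_union_three fun x hx => ⟨fun t ht => ?_, fun t ht => ?_⟩ <;>
      rw [hW t ht]
    exacts [(run_west_quiet t ht x hx).1, (run_west_quiet t ht x hx).2]

end Sandpile
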